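/- arXiv:1703.03052 — 2 statements merged into one kernel-verified Lean document; each statement's English description precedes it below -/
import Mathlib

section
/- Let M be a compact connected Riemannian manifold without boundary with Laplace–Beltrami operator Δ, and let E_ω(Δ) denote the span of eigenfunctions of Δ with eigenvalue ≤ ω. Then a function f ∈ L²(M) belongs to E_ω(Δ) if and only if f is in the domain of all powers of Δ and satisfies the Bernstein inequality ‖Δᵏ f‖_{L²(M)} ≤ ωᵏ ‖f‖_{L²(M)} for all natural numbers k. -/
/-!
Expanding `f` in the eigenbasis, with `a l = ‖⟨u_l, f⟩‖²`, one has `‖Δᵏ f‖² = Σ Λ_l^{2k} a_l`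
and `‖f‖² = Σ a_l`. If `f` only has coefficients with `Λ_l ≤ ω`, the Bernstein inequality is
termwise. Conversely, a single term with `Λ_l > ω` gives `a_l ≤ (ω / Λ_l)^{2k} ‖f‖² → 0`.
Since `Λ_l → ∞`, only finitely many `Λ_l` are at most `ω`, so vanishing of the other
coefficients places `f` in the (finite) span.
-/

open Filter Topology

namespace HilbertBasis

variable {ι 𝕜 E : Type*} [RCLike 𝕜] [NormedAddCommGroup E] [InnerProductSpace 𝕜 E]

theorem repr_eq_zero_of_mem_span_image (b : HilbertBasis ι 𝕜 E) {s : Set ι} {f : E}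
    (hf : f ∈ Submodule.span 𝕜 (b '' s)) {i : ι} (hi : i ∉ s) : b.repr f i = 0 := by
  have hperp : Submodule.span 𝕜 (b '' s) ≤ (𝕜 ∙ b i)ᗮ := by
    rw [Submodule.span_le]
    rintro _ ⟨j, hj, rfl⟩
    exact (Submodule.mem_orthogonal_singleton_iff_inner_right).mpr
      (b.orthonormal.inner_eq_zero (ne_of_mem_of_not_mem hj hi).symm)
  rw [b.repr_apply_apply]
  exact (Submodule.mem_orthogonal_singleton_iff_inner_right).mp (hperp hf)

theorem mem_span_image_of_repr_eq_zero (b : HilbertBasis ι 𝕜 E) {s : Set ι} (hs : s.Finite)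
    {f : E} (hf : ∀ i ∉ s, b.repr f i = 0) : f ∈ Submodule.span 𝕜 (b '' s) := by
  have hsum : HasSum (fun i => b.repr f i • b i) (∑ i ∈ hs.toFinset, b.repr f i • b i) :=
    hasSum_sum_of_ne_finset_zero fun i hi => by
      rw [hf i (by simpa using hi), zero_smul]
  rw [(b.hasSum_repr f).unique hsum]
  exact Submodule.sum_mem _ fun i hi =>
    Submodule.smul_mem _ _ (Submodule.subset_span ⟨i, by simpa using hi, rfl⟩)

theorem mem_span_image_iff_of_finite (b : HilbertBasis ι 𝕜 E) {s : Set ι} (hs : s.Finite)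
    (f : E) : f ∈ Submodule.span 𝕜 (b '' s) ↔ ∀ i ∉ s, b.repr f i = 0 :=
  ⟨fun hf _ hi => b.repr_eq_zero_of_mem_span_image hf hi, b.mem_span_image_of_repr_eq_zero hs⟩

theorem hasSum_sq_norm_repr (b : HilbertBasis ι 𝕜 E) (f : E) :
    HasSum (fun i => ‖b.repr f i‖ ^ 2) (‖f‖ ^ 2) := by
  simpa [b.repr.norm_map] using lp.hasSum_norm (p := 2) (by norm_num) (b.repr f)

end HilbertBasis

theorem eq_zero_of_forall_pow_mul_le {x y a C : ℝ} (hy : 0 ≤ y) (hyx : y < x) (ha : 0 ≤ a)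
    (h : ∀ k : ℕ, x ^ k * a ≤ y ^ k * C) : a = 0 := by
  have hx : 0 < x := hy.trans_lt hyx
  have hlim : Tendsto (fun k : ℕ => (y / x) ^ k * C) atTop (𝓝 0) := by
    simpa using (tendsto_pow_atTop_nhds_zero_of_lt_one (by positivity)
      ((div_lt_one hx).mpr hyx)).mul_const C
  have hbound : ∀ k : ℕ, a ≤ (y / x) ^ k * C := fun k => by
    rw [div_pow, div_mul_eq_mul_div, le_div_iff₀ (pow_pos hx k), mul_comm]
    exact h k
  exact le_antisymm (ge_of_tendsto' hlim hbound) ha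

section SpectralSums

variable {ι : Type*} {Λ a : ι → ℝ} {ω : ℝ}

theorem summable_pow_mul_and_tsum_le_of_forall_lt_imp_eq_zero (hΛ : ∀ i, 0 ≤ Λ i)
    (ha0 : ∀ i, 0 ≤ a i) (ha : Summable a) (hvan : ∀ i, ω < Λ i → a i = 0) (n : ℕ) :
    Summable (fun i => Λ i ^ n * a i) ∧ ∑' i, Λ i ^ n * a i ≤ ω ^ n * ∑' i, a i := by
  have hle : ∀ i, Λ i ^ n * a i ≤ ω ^ n * a i := fun i => by
    rcases le_or_gt (Λ i) ω with h | h
    · exact mul_le_mul_of_nonneg_right (pow_le_pow_left₀ (hΛ i) h n) (ha0 i)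
    · simp [hvan i h]
  have hsum : Summable fun i => Λ i ^ n * a i :=
    (ha.mul_left _).of_nonneg_of_le (fun i => mul_nonneg (pow_nonneg (hΛ i) n) (ha0 i)) hle
  refine ⟨hsum, ?_⟩
  rw [← tsum_mul_left]
  exact hsum.tsum_le_tsum hle (ha.mul_left _)

theorem eq_zero_of_tsum_pow_mul_le (hω : 0 ≤ ω) (ha0 : ∀ i, 0 ≤ a i)
    (hsum : ∀ k : ℕ, Summable fun i => Λ i ^ (2 * k) * a i)
    (hle : ∀ k : ℕ, ∑' i, Λ i ^ (2 * k) * a i ≤ ω ^ (2 * k) * ∑' i, a i)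
    {i : ι} (hi : ω < Λ i) : a i = 0 := by
  refine eq_zero_of_forall_pow_mul_le (sq_nonneg ω) (pow_lt_pow_left₀ hi hω two_ne_zero) (ha0 i)
    (C := ∑' i, a i) fun k => ?_
  rw [← pow_mul, ← pow_mul]
  refine le_trans ?_ (hle k)
  exact (hsum k).le_tsum i fun j _ => mul_nonneg ((even_two_mul k).pow_nonneg _) (ha0 j)

end SpectralSums

theorem bandlimited_iff_bernstein
    {H : Type*} [NormedAddCommGroup H] [InnerProductSpace ℂ H] [CompleteSpace H]
    (u : HilbertBasis ℕ ℂ H) (Λ : ℕ → ℝ)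
    (hΛ0 : ∀ l, 0 ≤ Λ l)
    (hΛtop : Filter.Tendsto Λ Filter.atTop Filter.atTop)
    (ω : ℝ) (hω : 0 ≤ ω) (f : H) :
    f ∈ Submodule.span ℂ (u '' {l : ℕ | Λ l ≤ ω}) ↔
      ((∀ k : ℕ, Summable fun l : ℕ => (Λ l) ^ (2 * k) * ‖u.repr f l‖ ^ 2) ∧
        ∀ k : ℕ,
          Real.sqrt (∑' l : ℕ, (Λ l) ^ (2 * k) * ‖u.repr f l‖ ^ 2) ≤ ω ^ k * ‖f‖) := by
  have hfin : {l : ℕ | Λ l ≤ ω}.Finite :=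
    (eventually_cofinite.mp (Nat.cofinite_eq_atTop ▸ hΛtop.eventually_gt_atTop ω)).subset
      fun _ hl => not_lt.mpr hl
  have hparseval := u.hasSum_sq_norm_repr f
  have hbernstein : ∀ k : ℕ, Real.sqrt (∑' l, Λ l ^ (2 * k) * ‖u.repr f l‖ ^ 2) ≤ ω ^ k * ‖f‖ ↔
      ∑' l, Λ l ^ (2 * k) * ‖u.repr f l‖ ^ 2 ≤ ω ^ (2 * k) * ∑' l, ‖u.repr f l‖ ^ 2 := fun k => by
    rw [Real.sqrt_le_left (by positivity), mul_pow, ← pow_mul, mul_comm k, ← hparseval.tsum_eq]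
  simp only [u.mem_span_image_iff_of_finite hfin, Set.mem_ofPred_eq, not_le, hbernstein]
  constructor
  · intro hvan
    have hmoments := summable_pow_mul_and_tsum_le_of_forall_lt_imp_eq_zero hΛ0
      (fun l => by positivity) hparseval.summable fun l (hl : ω < Λ l) => by simp [hvan l hl]
    exact ⟨fun k => (hmoments (2 * k)).1, fun k => (hmoments (2 * k)).2⟩
  · rintro ⟨hsum, hle⟩ l hl
    simpa using eq_zero_of_tsum_pow_mul_le hω (fun l => by positivity) hsum hle hl
end

section
/- Let M be a compact Riemannian manifold of dimension d with Laplace–Beltrami operator Δ, eigenvalues λ_l, and orthonormal eigenbasis u_l, and assume the heat kernel satisfies two-sided Gaussian bounds for small time. Then there exist constants A₁ = A₁(M) > 0 and A₂ = A₂(M) > 0 such that for all sufficiently large s > 0 and all x ∈ M: A₁ / |B(x, s^{−1})| ≤ Σ_{l : λ_l ≤ s} |u_l(x)|² ≤ A₂ / |B(x, s^{−1})|. -/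
/-!
Write `w l = |u_l(x)|²`, so that `p_t(x,x) = ∑ e^{-tΛ_l²} w l` is comparable to `t^{-d/2}` for
`0 < t < 1`. At `t = s⁻²` every term with `Λ_l ≤ s` has weight at least `e⁻¹`, so the spectral
sum is at most `e · p_{s⁻²}(x,x) ≲ s^d`. At `t = T s⁻²` the terms with `Λ_l > s` contribute at
most `e^{-T/2} p_{t/2}(x,x) ≲ e^{-T/2} 2^{d/2} t^{-d/2}`, which for `T` large is at most half of
`C₁ t^{-d/2} ≤ p_t(x,x)`; the rest is at most the spectral sum, which is therefore `≳ T^{-d/2} s^d`.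
The volume bounds turn `s^d` into `1 / |B(x, s⁻¹)|` up to constants.
-/

open MeasureTheory Metric Set Real Filter Topology

noncomputable def spectralSum {ι : Type*} (Λ w : ι → ℝ) (s : ℝ) : ℝ :=
  ∑' i : {i // Λ i ≤ s}, w i

theorem Real.div_rpow_neg {x y : ℝ} (hx : 0 ≤ x) (hy : 0 ≤ y) (z : ℝ) :
    (x / y) ^ (-z) = x ^ (-z) * y ^ z := by
  rw [Real.div_rpow hx hy, Real.rpow_neg hy, div_inv_eq_mul]

theorem exists_pos_mul_exp_neg_half_le (K : ℝ) {ε : ℝ} (hε : 0 < ε) :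
    ∃ T > 0, K * exp (-(T / 2)) ≤ ε := by
  have hlim : Tendsto (fun T => K * exp (-(T / 2))) atTop (𝓝 0) := by
    simpa using (tendsto_exp_neg_atTop_nhds_zero.comp
      (tendsto_id.atTop_div_const two_pos)).const_mul K
  obtain ⟨T, hTε, hT⟩ := ((hlim.eventually_le_const hε).and (eventually_gt_atTop 0)).exists
  exact ⟨T, hT, hTε⟩

section HeatTrace

variable {ι : Type*} {Λ w : ι → ℝ}

theorem le_exp_mul_heat_term {i : ι} {t s : ℝ} (hΛ : 0 ≤ Λ i) (hw : 0 ≤ w i) (ht : 0 ≤ t)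
    (hs : Λ i ≤ s) : w i ≤ exp (t * s ^ 2) * (exp (-t * Λ i ^ 2) * w i) := by
  have hΛs : Λ i ^ 2 ≤ s ^ 2 := pow_le_pow_left₀ hΛ hs 2
  have hexp : 1 ≤ exp (t * s ^ 2) * exp (-t * Λ i ^ 2) := by
    rw [← exp_add]
    exact one_le_exp (by nlinarith)
  rw [← mul_assoc]
  exact le_mul_of_one_le_left hw hexp

theorem heat_term_le_exp_mul {i : ι} {t t' s : ℝ} (hw : 0 ≤ w i) (ht' : t' ≤ t) (hs : 0 ≤ s)
    (hsΛ : s ≤ Λ i) :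
    exp (-t * Λ i ^ 2) * w i ≤ exp (-((t - t') * s ^ 2)) * (exp (-t' * Λ i ^ 2) * w i) := by
  have hsΛ2 : s ^ 2 ≤ Λ i ^ 2 := pow_le_pow_left₀ hs hsΛ 2
  rw [← mul_assoc, ← exp_add]
  gcongr
  nlinarith

theorem summable_spectral_of_summable_heat (hΛ : ∀ i, 0 ≤ Λ i) (hw : ∀ i, 0 ≤ w i) {t : ℝ}
    (ht : 0 ≤ t) (hsum : Summable fun i => exp (-t * Λ i ^ 2) * w i) (s : ℝ) :
    Summable fun i : {i // Λ i ≤ s} => w i :=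
  Summable.of_nonneg_of_le (fun i => hw i)
    (fun i => le_exp_mul_heat_term (hΛ i) (hw i) ht i.2)
    ((hsum.subtype {i | Λ i ≤ s}).mul_left _)

theorem spectralSum_le_exp_mul_of_hasSum (hΛ : ∀ i, 0 ≤ Λ i) (hw : ∀ i, 0 ≤ w i) {t q : ℝ}
    (ht : 0 ≤ t) (hq : HasSum (fun i => exp (-t * Λ i ^ 2) * w i) q) (s : ℝ) :
    spectralSum Λ w s ≤ exp (t * s ^ 2) * q := by
  have hsubtype := hq.summable.subtype {i | Λ i ≤ s}
  calc spectralSum Λ w s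
      ≤ ∑' i : {i // Λ i ≤ s}, exp (t * s ^ 2) * (exp (-t * Λ i ^ 2) * w i) :=
        (summable_spectral_of_summable_heat hΛ hw ht hq.summable s).tsum_le_tsum
          (fun i => le_exp_mul_heat_term (hΛ i) (hw i) ht i.2) (hsubtype.mul_left _)
    _ = exp (t * s ^ 2) * ∑' i : {i // Λ i ≤ s}, exp (-t * Λ i ^ 2) * w i := tsum_mul_left
    _ ≤ exp (t * s ^ 2) * q := by
        rw [← hq.tsum_eq]
        gcongr
        exact hq.summable.tsum_subtype_le _ _ (fun i => by have := hw i; positivity)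

theorem tsum_heat_gt_le (hw : ∀ i, 0 ≤ w i) {t t' s q' : ℝ} (ht' : t' ≤ t) (hs : 0 ≤ s)
    (hsum : Summable fun i => exp (-t * Λ i ^ 2) * w i)
    (hq' : HasSum (fun i => exp (-t' * Λ i ^ 2) * w i) q') :
    ∑' i : ↥{i | Λ i ≤ s}ᶜ, exp (-t * Λ i ^ 2) * w i ≤ exp (-((t - t') * s ^ 2)) * q' := by
  have hterm : ∀ i : ↥{i | Λ i ≤ s}ᶜ, exp (-t * Λ i ^ 2) * w i
      ≤ exp (-((t - t') * s ^ 2)) * (exp (-t' * Λ i ^ 2) * w i) := fun i =>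
    heat_term_le_exp_mul (hw i) ht' hs (le_of_lt (not_le.mp i.2))
  calc ∑' i : ↥{i | Λ i ≤ s}ᶜ, exp (-t * Λ i ^ 2) * w i
      ≤ ∑' i : ↥{i | Λ i ≤ s}ᶜ, exp (-((t - t') * s ^ 2)) * (exp (-t' * Λ i ^ 2) * w i) :=
        (hsum.subtype _).tsum_le_tsum hterm ((hq'.summable.subtype _).mul_left _)
    _ = exp (-((t - t') * s ^ 2)) * ∑' i : ↥{i | Λ i ≤ s}ᶜ, exp (-t' * Λ i ^ 2) * w i :=
        tsum_mul_left
    _ ≤ exp (-((t - t') * s ^ 2)) * q' := by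
        rw [← hq'.tsum_eq]
        gcongr
        exact hq'.summable.tsum_subtype_le _ _ (fun i => by have := hw i; positivity)

theorem sub_exp_mul_le_spectralSum (hΛ : ∀ i, 0 ≤ Λ i) (hw : ∀ i, 0 ≤ w i) {t t' s q q' : ℝ}
    (ht : 0 ≤ t) (ht' : t' ≤ t) (hs : 0 ≤ s)
    (hq : HasSum (fun i => exp (-t * Λ i ^ 2) * w i) q)
    (hq' : HasSum (fun i => exp (-t' * Λ i ^ 2) * w i) q') :
    q - exp (-((t - t') * s ^ 2)) * q' ≤ spectralSum Λ w s := by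
  have hsplit := hq.summable.tsum_subtype_add_tsum_subtype_compl {i | Λ i ≤ s}
  rw [hq.tsum_eq] at hsplit
  have hlow : ∑' i : ↥{i | Λ i ≤ s}, exp (-t * Λ i ^ 2) * w i ≤ spectralSum Λ w s :=
    (hq.summable.subtype _).tsum_le_tsum
      (fun i => mul_le_of_le_one_left (hw i) (exp_le_one_iff.mpr (by nlinarith [sq_nonneg (Λ i)])))
      (summable_spectral_of_summable_heat hΛ hw ht hq.summable s)
  have htail := tsum_heat_gt_le hw ht' hs hq.summable hq'
  linarith

variable {q : ℝ → ℝ} {C₁ C₂ α : ℝ}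

theorem spectralSum_le_of_heatTrace_le (hΛ : ∀ i, 0 ≤ Λ i) (hw : ∀ i, 0 ≤ w i)
    (hq : ∀ t, 0 < t → HasSum (fun i => exp (-t * Λ i ^ 2) * w i) (q t))
    (hup : ∀ t, 0 < t → t < 1 → q t ≤ C₂ * t ^ (-α)) {s : ℝ} (hs : 1 < s) :
    spectralSum Λ w s ≤ exp 1 * C₂ * (s ^ 2) ^ α := by
  have ht : 0 < 1 / s ^ 2 := by positivity
  have ht1 : 1 / s ^ 2 < 1 := by rw [div_lt_one (by positivity)]; nlinarith
  calc spectralSum Λ w s ≤ exp (1 / s ^ 2 * s ^ 2) * q (1 / s ^ 2) :=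
        spectralSum_le_exp_mul_of_hasSum hΛ hw ht.le (hq _ ht) s
    _ ≤ exp 1 * (C₂ * (1 / s ^ 2) ^ (-α)) := by
        rw [one_div_mul_cancel (by positivity)]
        gcongr
        exact hup _ ht ht1
    _ = exp 1 * C₂ * (s ^ 2) ^ α := by
        rw [Real.div_rpow_neg zero_le_one (by positivity), Real.one_rpow]
        ring

theorem mul_rpow_le_spectralSum (hΛ : ∀ i, 0 ≤ Λ i) (hw : ∀ i, 0 ≤ w i)
    (hq : ∀ t, 0 < t → HasSum (fun i => exp (-t * Λ i ^ 2) * w i) (q t))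
    (hlow : ∀ t, 0 < t → t < 1 → C₁ * t ^ (-α) ≤ q t)
    (hup : ∀ t, 0 < t → t < 1 → q t ≤ C₂ * t ^ (-α))
    {T : ℝ} (hT : 0 < T) (hTC : C₂ * 2 ^ α * exp (-(T / 2)) ≤ C₁ / 2) {s : ℝ} (hs : T + 1 ≤ s) :
    C₁ / 2 * T ^ (-α) * (s ^ 2) ^ α ≤ spectralSum Λ w s := by
  set t := T / s ^ 2 with ht_def
  have hs0 : 0 < s := by linarith
  have ht : 0 < t := by positivity
  have ht1 : t < 1 := by rw [div_lt_one (by positivity)]; nlinarith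
  have hts : (t - t / 2) * s ^ 2 = T / 2 := by rw [ht_def]; field_simp; ring
  have hrpow : t ^ (-α) = T ^ (-α) * (s ^ 2) ^ α := Real.div_rpow_neg hT.le (by positivity) α
  have hrpow_half : (t / 2) ^ (-α) = t ^ (-α) * 2 ^ α := Real.div_rpow_neg ht.le zero_le_two α
  have hmain := sub_exp_mul_le_spectralSum hΛ hw ht.le (half_le_self ht.le) hs0.le
    (hq t ht) (hq (t / 2) (half_pos ht))
  rw [hts] at hmain
  have hq_half : q (t / 2) ≤ C₂ * 2 ^ α * t ^ (-α) := by
    have := hup (t / 2) (half_pos ht) (by linarith)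
    rwa [hrpow_half, ← mul_assoc, mul_right_comm] at this
  have htα : 0 ≤ t ^ (-α) := by positivity
  calc C₁ / 2 * T ^ (-α) * (s ^ 2) ^ α = C₁ * t ^ (-α) - C₁ / 2 * t ^ (-α) := by
        rw [hrpow]; ring
    _ ≤ q t - exp (-(T / 2)) * q (t / 2) := by
        have := hlow t ht ht1
        have := mul_le_mul_of_nonneg_left hq_half (exp_pos (-(T / 2))).le
        nlinarith
    _ ≤ spectralSum Λ w s := hmain

end HeatTrace

theorem div_le_pow_of_mul_inv_pow_le {a V s : ℝ} {n : ℕ} (hV : 0 < V) (hs : 0 < s)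
    (h : a * s⁻¹ ^ n ≤ V) : a / V ≤ s ^ n := by
  rw [inv_pow, mul_inv_le_iff₀ (by positivity)] at h
  rwa [div_le_iff₀ hV, mul_comm]

theorem pow_le_div_of_le_mul_inv_pow {a V s : ℝ} {n : ℕ} (hV : 0 < V) (hs : 0 < s)
    (h : V ≤ a * s⁻¹ ^ n) : s ^ n ≤ a / V := by
  rw [inv_pow, le_mul_inv_iff₀ (by positivity)] at h
  rwa [le_div_iff₀ hV, mul_comm]

theorem spectral_function_ball_bounds_general
    {M : Type*} [MetricSpace M] [MeasurableSpace M]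
    (μ : Measure M) (d : ℕ)
    (Λ : ℕ → ℝ) (u : ℕ → M → ℂ) (hΛ0 : ∀ l, 0 ≤ Λ l)
    (p : ℝ → M → M → ℝ) (C₁ C₂ c₁ c₂ a₁ a₂ : ℝ)
    (hC₁ : 0 < C₁) (hC₂ : 0 < C₂)
    (ha₁ : 0 < a₁) (ha₂ : 0 < a₂)
    (hdiag : ∀ t : ℝ, 0 < t → ∀ x : M,
      HasSum (fun l => Real.exp (-t * (Λ l) ^ 2) * ‖u l x‖ ^ 2) (p t x x))
    (hgauss : ∀ t : ℝ, 0 < t → t < 1 → ∀ x y : M,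
      C₁ * t ^ (-(d : ℝ) / 2) * Real.exp (-c₁ * dist x y ^ 2 / t) ≤ p t x y ∧
      p t x y ≤ C₂ * t ^ (-(d : ℝ) / 2) * Real.exp (-c₂ * dist x y ^ 2 / t))
    (hvol : ∀ (x : M) (ρ : ℝ), 0 < ρ → ρ < 1 →
      a₁ * ρ ^ d ≤ (μ (ball x ρ)).toReal ∧ (μ (ball x ρ)).toReal ≤ a₂ * ρ ^ d) :
    ∃ A₁ A₂ : ℝ, 0 < A₁ ∧ 0 < A₂ ∧ ∃ s₀ : ℝ, 0 < s₀ ∧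
      ∀ s : ℝ, s₀ ≤ s → ∀ x : M,
        A₁ / (μ (ball x s⁻¹)).toReal ≤ (∑' l : {l : ℕ // Λ l ≤ s}, ‖u l.1 x‖ ^ 2) ∧
        (∑' l : {l : ℕ // Λ l ≤ s}, ‖u l.1 x‖ ^ 2) ≤ A₂ / (μ (ball x s⁻¹)).toReal := by
  obtain ⟨T, hT, hTC⟩ := exists_pos_mul_exp_neg_half_le (C₂ * 2 ^ ((d : ℝ) / 2)) (half_pos hC₁)
  refine ⟨C₁ / 2 * T ^ (-((d : ℝ) / 2)) * a₁, exp 1 * C₂ * a₂, by positivity, by positivity,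
    T + 1, by linarith, fun s hs x => ?_⟩
  have hs1 : 1 < s := by linarith
  have hs0 : 0 < s := by linarith
  have hw : ∀ l, 0 ≤ ‖u l x‖ ^ 2 := fun l => sq_nonneg _
  have hheat : ∀ t, 0 < t → t < 1 →
      C₁ * t ^ (-((d : ℝ) / 2)) ≤ p t x x ∧ p t x x ≤ C₂ * t ^ (-((d : ℝ) / 2)) := by
    intro t ht ht1
    simpa [neg_div] using hgauss t ht ht1 x x
  have hsd : (s ^ 2) ^ ((d : ℝ) / 2) = s ^ d := by
    rw [← Real.rpow_natCast_mul (by positivity), Nat.cast_ofNat,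
      mul_div_cancel₀ _ two_ne_zero, Real.rpow_natCast]
  obtain ⟨hVlow, hVup⟩ := hvol x s⁻¹ (by positivity) (inv_lt_one_of_one_lt₀ hs1)
  have hV : 0 < (μ (ball x s⁻¹)).toReal := lt_of_lt_of_le (by positivity) hVlow
  have hlower := mul_rpow_le_spectralSum hΛ0 hw (fun t ht => hdiag t ht x)
    (fun t ht ht1 => (hheat t ht ht1).1) (fun t ht ht1 => (hheat t ht ht1).2) hT hTC hs
  have hupper := spectralSum_le_of_heatTrace_le hΛ0 hw (fun t ht => hdiag t ht x)
    (fun t ht ht1 => (hheat t ht ht1).2) hs1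
  rw [hsd] at hlower hupper
  constructor
  · calc C₁ / 2 * T ^ (-((d : ℝ) / 2)) * a₁ / (μ (ball x s⁻¹)).toReal
        = C₁ / 2 * T ^ (-((d : ℝ) / 2)) * (a₁ / (μ (ball x s⁻¹)).toReal) := by ring
      _ ≤ C₁ / 2 * T ^ (-((d : ℝ) / 2)) * s ^ d := by
          gcongr
          exact div_le_pow_of_mul_inv_pow_le hV hs0 hVlow
      _ ≤ _ := hlower
  · calc _ ≤ exp 1 * C₂ * s ^ d := hupper
      _ ≤ exp 1 * C₂ * (a₂ / (μ (ball x s⁻¹)).toReal) := by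
          gcongr
          exact pow_le_div_of_le_mul_inv_pow hV hs0 hVup
      _ = exp 1 * C₂ * a₂ / (μ (ball x s⁻¹)).toReal := by ring

theorem spectral_function_ball_bounds
    {M : Type*} [MetricSpace M] [CompactSpace M] [MeasurableSpace M]
    (μ : Measure M) (d : ℕ)
    (Λ : ℕ → ℝ) (u : ℕ → M → ℂ) (hΛ0 : ∀ l, 0 ≤ Λ l)
    (hΛtop : Filter.Tendsto Λ Filter.atTop Filter.atTop)
    (p : ℝ → M → M → ℝ) (C₁ C₂ c₁ c₂ a₁ a₂ : ℝ)
    (hC₁ : 0 < C₁) (hC₂ : 0 < C₂) (hc₁ : 0 < c₁) (hc₂ : 0 < c₂)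
    (ha₁ : 0 < a₁) (ha₂ : 0 < a₂)
    (hdiag : ∀ t : ℝ, 0 < t → ∀ x : M,
      HasSum (fun l => Real.exp (-t * (Λ l) ^ 2) * ‖u l x‖ ^ 2) (p t x x))
    (hgauss : ∀ t : ℝ, 0 < t → t < 1 → ∀ x y : M,
      C₁ * t ^ (-(d : ℝ) / 2) * Real.exp (-c₁ * dist x y ^ 2 / t) ≤ p t x y ∧
      p t x y ≤ C₂ * t ^ (-(d : ℝ) / 2) * Real.exp (-c₂ * dist x y ^ 2 / t))
    (hvol : ∀ (x : M) (ρ : ℝ), 0 < ρ → ρ < 1 →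
      a₁ * ρ ^ d ≤ (μ (ball x ρ)).toReal ∧ (μ (ball x ρ)).toReal ≤ a₂ * ρ ^ d) :
    ∃ A₁ A₂ : ℝ, 0 < A₁ ∧ 0 < A₂ ∧ ∃ s₀ : ℝ, 0 < s₀ ∧
      ∀ s : ℝ, s₀ ≤ s → ∀ x : M,
        A₁ / (μ (ball x s⁻¹)).toReal ≤ (∑' l : {l : ℕ // Λ l ≤ s}, ‖u l.1 x‖ ^ 2) ∧
        (∑' l : {l : ℕ // Λ l ≤ s}, ‖u l.1 x‖ ^ 2) ≤ A₂ / (μ (ball x s⁻¹)).toReal :=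
  spectral_function_ball_bounds_general μ d Λ u hΛ0 p C₁ C₂ c₁ c₂ a₁ a₂ hC₁ hC₂ ha₁ ha₂ hdiag hgauss
    hvol
end
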